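/- Let φ ∈ C¹(𝕋). Then the limit lim_{n→∞} inf_{x : E^n(x)=x} (1/n)·φ^n_x over periodic points exists and equals φ_min := lim_{n→∞} inf_{x∈𝕋} (1/n)·φ^n_x (the latter limit exists by subadditivity of the sequence (inf_x φ^n_x)_n and Fekete's lemma). -/

import Mathlib

open MeasureTheory ProbabilityTheory Real Filter Topology

noncomputable section

/-- A smooth orientation-preserving expanding circle map of degree `deg ≥ 2`,
given by its lift to `ℝ`. -/
structure ExpandingCircleMap where
  lift : ℝ → ℝ
  deg : ℕ
  two_le_deg : 2 ≤ deg
  smooth : ContDiff ℝ (⊤ : ℕ∞) lift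
  lift_add_one : ∀ x : ℝ, lift (x + 1) = lift x + deg
  expanding : ∀ x : ℝ, 1 < deriv lift x

namespace ExpandingCircleMap

variable (E : ExpandingCircleMap)

/-- `M = sup E'`. -/
def M : ℝ := ⨆ x : ℝ, deriv E.lift x

/-- `m = inf E'`. -/
def mE : ℝ := ⨅ x : ℝ, deriv E.lift x

/-- The set of representatives in `[0,1)` of fixed points of `E^n` on the circle. -/
def Fix (n : ℕ) : Set ℝ :=
  {x | x ∈ Set.Ico (0 : ℝ) 1 ∧ ∃ k : ℤ, E.lift^[n] x = x + (k : ℝ)}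

/-- Birkhoff sum `φ^n_x`. -/
def birkhoff (φ : ℝ → ℝ) (n : ℕ) (x : ℝ) : ℝ :=
  ∑ j ∈ Finset.range n, φ (E.lift^[j] x)

/-- `(E^n)'(x)`. -/
def derivIter (n : ℕ) (x : ℝ) : ℝ := deriv (E.lift^[n]) x

/-- The prime period `l_x` of a periodic point `x`. -/
def primePeriod (x : ℝ) : ℕ :=
  sInf {j : ℕ | 1 ≤ j ∧ ∃ k : ℤ, E.lift^[j] x = x + (k : ℝ)}

/-- `x` and `y` represent points of the same orbit of `E` on the circle. -/
def sameOrbit (x y : ℝ) : Prop := ∃ j : ℕ, ∃ k : ℤ, E.lift^[j] x = y + (k : ℝ)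

/-- The normalizing amplitude
`A_n := (∑_{E^n x = x} l_x/((E^n)'(x)-1)²)^{-1/2}`. -/
def An (n : ℕ) : ℝ :=
  1 / Real.sqrt (∑' x : E.Fix n, (E.primePeriod x : ℝ) / (E.derivIter n x - 1) ^ 2)

/-- A finite set `O ⊆ [0,1)` of representatives is an orbit of period (dividing) `n`:
it is a nonempty equivalence class of periodic points of period `n` for the
"same orbit" relation. Its cardinality is then the prime period of the orbit. -/
def IsOrbit (n : ℕ) (O : Finset ℝ) : Prop :=
  O.Nonempty ∧ ↑O ⊆ E.Fix n ∧ (∀ x ∈ O, ∀ y ∈ O, E.sameOrbit x y) ∧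
    (∀ x ∈ O, ∀ y ∈ E.Fix n, E.sameOrbit x y → y ∈ O)

/-- The Birkhoff sum `φ^n_O` of an orbit (evaluated at some point of the orbit). -/
def orbitBirkhoff (φ : ℝ → ℝ) (n : ℕ) (O : Finset ℝ) : ℝ :=
  if h : O.Nonempty then E.birkhoff φ n (O.min' h) else 0

/-- `J = log E'`. -/
def J : ℝ → ℝ := fun x => Real.log (deriv E.lift x)

/-- The condition (cond2): `n ≤ c log ξ / (log l + (k + 1/2 + ε/2) log M)`. -/
def cond2 (k : ℕ) (ε c : ℝ) (n : ℕ) (ξ : ℝ) : Prop :=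
  (n : ℝ) ≤ c * Real.log ξ / (Real.log E.deg + ((k : ℝ) + 1 / 2 + ε / 2) * Real.log E.M)

lemma hdiff : Differentiable ℝ E.lift := E.smooth.differentiable (by simp)

lemma hcont : Continuous E.lift := E.hdiff.continuous

lemma lift_mono : StrictMono E.lift :=
  strictMono_of_deriv_pos fun x => zero_lt_one.trans (E.expanding x)

lemma iter_mono (n : ℕ) : Monotone (E.lift^[n]) := E.lift_mono.monotone.iterate n

lemma deriv_per : Function.Periodic (deriv E.lift) 1 := by
  intro x
  have h1 : deriv E.lift (x + 1) = deriv (fun y => E.lift (y + 1)) x := by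
    rw [deriv_comp_add_const]
  have h2 : (fun y => E.lift (y + 1)) = fun y => E.lift y + (E.deg : ℝ) := by
    funext y; rw [E.lift_add_one]
  rw [h1, h2, deriv_add_const]

lemma per_int {g : ℝ → ℝ} (h : Function.Periodic g 1) (x : ℝ) (k : ℤ) :
    g (x + (k : ℝ)) = g x := by
  simpa using (h.int_mul k) x

lemma lift_add_int (x : ℝ) (k : ℤ) :
    E.lift (x + (k : ℝ)) = E.lift x + (k : ℝ) * E.deg := by
  have key : ∀ y : ℝ, E.lift (y + 1) - ((y : ℝ) + 1) * E.deg = E.lift y - y * E.deg := by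
    intro y; rw [E.lift_add_one]; ring
  have hper : Function.Periodic (fun y => E.lift y - y * E.deg) 1 := fun y => key y
  have := per_int hper x k
  linarith [this]

lemma iter_add_int (n : ℕ) (x : ℝ) (k : ℤ) :
    E.lift^[n] (x + (k : ℝ)) = E.lift^[n] x + (k : ℝ) * (E.deg : ℝ) ^ n := by
  induction n generalizing x k with
  | zero => simp
  | succ n ih =>
    rw [Function.iterate_succ_apply, Function.iterate_succ_apply, E.lift_add_int x k]
    have : E.lift x + (k : ℝ) * (E.deg : ℝ) = E.lift x + ((k * E.deg : ℤ) : ℝ) := by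
      push_cast; ring
    rw [this, ih]
    push_cast; ring

/-- minimum of the derivative -/
lemma exists_m : ∃ m : ℝ, 1 < m ∧ ∀ x : ℝ, m ≤ deriv E.lift x := by
  have hc : Continuous (deriv E.lift) := E.smooth.continuous_deriv (by simp)
  obtain ⟨x₀, _, hx₀⟩ := isCompact_Icc.exists_isMinOn (Set.nonempty_Icc.2 zero_le_one)
    hc.continuousOn
  refine ⟨deriv E.lift x₀, E.expanding x₀, fun x => ?_⟩
  have h1 : deriv E.lift x = deriv E.lift (Int.fract x) := by
    have h : Int.fract x + ((⌊x⌋ : ℤ) : ℝ) = x := by rw [Int.fract]; ring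
    rw [← per_int E.deriv_per (Int.fract x) ⌊x⌋, h]
  rw [h1]
  exact hx₀ (Set.mem_Icc.2 ⟨Int.fract_nonneg x, le_of_lt (Int.fract_lt_one x)⟩)

lemma expand_once {m : ℝ} (hm : ∀ x : ℝ, m ≤ deriv E.lift x) {a b : ℝ} (hab : a ≤ b) :
    m * (b - a) ≤ E.lift b - E.lift a := by
  have hmono : Monotone (fun x => E.lift x - m * x) := by
    apply monotone_of_deriv_nonneg
    · exact E.hdiff.sub (differentiable_id.const_mul m)
    · intro x
      rw [deriv_fun_sub (E.hdiff x) (differentiableAt_fun_id.const_mul m)]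
      have hd : deriv (fun y : ℝ => m * y) x = m := by
        rw [deriv_const_mul m differentiableAt_fun_id]; simp
      rw [hd]
      linarith [hm x]
  have h := hmono hab
  simp only at h
  linarith

lemma expand_iter {m : ℝ} (hm1 : 1 < m) (hm : ∀ x : ℝ, m ≤ deriv E.lift x)
    (n : ℕ) {a b : ℝ} (hab : a ≤ b) :
    m ^ n * (b - a) ≤ E.lift^[n] b - E.lift^[n] a := by
  induction n generalizing a b with
  | zero => simp
  | succ n ih =>
    rw [Function.iterate_succ_apply, Function.iterate_succ_apply]
    have h1 : E.lift a ≤ E.lift b := E.lift_mono.monotone hab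
    have h2 := ih h1
    have h3 := E.expand_once hm hab
    calc m ^ (n + 1) * (b - a) = m ^ n * (m * (b - a)) := by ring
      _ ≤ m ^ n * (E.lift b - E.lift a) := by
          apply mul_le_mul_of_nonneg_left h3 (pow_nonneg (by linarith) n)
      _ ≤ E.lift^[n] (E.lift b) - E.lift^[n] (E.lift a) := h2

lemma birkhoff_add_int (φ : ℝ → ℝ) (hper : Function.Periodic φ 1) (n : ℕ) (x : ℝ) (k : ℤ) :
    E.birkhoff φ n (x + (k : ℝ)) = E.birkhoff φ n x := by
  unfold birkhoff
  apply Finset.sum_congr rfl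
  intro j _
  rw [E.iter_add_int j x k]
  have : (k : ℝ) * (E.deg : ℝ) ^ j = (((k * E.deg ^ j : ℤ)) : ℝ) := by push_cast; ring
  rw [this, per_int hper]

lemma birkhoff_split (φ : ℝ → ℝ) (a b : ℕ) (x : ℝ) :
    E.birkhoff φ (a + b) x = E.birkhoff φ a x + E.birkhoff φ b (E.lift^[a] x) := by
  unfold birkhoff
  rw [Finset.sum_range_add]
  congr 1
  apply Finset.sum_congr rfl
  intro j _
  rw [add_comm a j, Function.iterate_add_apply]

lemma lip_aux {g : ℝ → ℝ} (hg : Differentiable ℝ g) {L : ℝ} (hL : ∀ x, deriv g x ≤ L)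
    {a b : ℝ} (hab : a ≤ b) : g b - g a ≤ L * (b - a) := by
  have hmono : Monotone (fun x => L * x - g x) := by
    apply monotone_of_deriv_nonneg
    · exact (differentiable_id.const_mul L).sub hg
    · intro x
      rw [deriv_fun_sub (differentiableAt_fun_id.const_mul L) (hg x)]
      have hd : deriv (fun y : ℝ => L * y) x = L := by
        rw [deriv_const_mul L differentiableAt_fun_id]; simp
      rw [hd]
      linarith [hL x]
  have h := hmono hab
  simp only at h
  linarith

lemma lip_of_c1_per {φ : ℝ → ℝ} (hφ : ContDiff ℝ 1 φ) (hper : Function.Periodic φ 1) :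
    ∃ L : ℝ, 0 ≤ L ∧ ∀ a b : ℝ, a ≤ b → |φ b - φ a| ≤ L * (b - a) := by
  have hdφ : Continuous (deriv φ) := hφ.continuous_deriv le_rfl
  have hdper : Function.Periodic (deriv φ) 1 := by
    intro x
    have h1 : deriv φ (x + 1) = deriv (fun y => φ (y + 1)) x := by
      rw [deriv_comp_add_const]
    have h2 : (fun y => φ (y + 1)) = φ := funext fun y => hper y
    rw [h1, h2]
  have habs : Function.Periodic (fun x => |deriv φ x|) 1 := fun x => by simp [hdper x]
  obtain ⟨x₁, _, hx₁⟩ := isCompact_Icc.exists_isMaxOn (Set.nonempty_Icc.2 zero_le_one)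
    (hdφ.abs.continuousOn)
  set L := |deriv φ x₁| with hLdef
  have hLb : ∀ x, |deriv φ x| ≤ L := by
    intro x
    have h : Int.fract x + ((⌊x⌋ : ℤ) : ℝ) = x := by rw [Int.fract]; ring
    have h1 : |deriv φ x| = |deriv φ (Int.fract x)| := by
      rw [← per_int habs (Int.fract x) ⌊x⌋, h]
    rw [h1]
    exact hx₁ (Set.mem_Icc.2 ⟨Int.fract_nonneg x, le_of_lt (Int.fract_lt_one x)⟩)
  have hdiffφ : Differentiable ℝ φ := hφ.differentiable (by simp)
  refine ⟨L, abs_nonneg _, fun a b hab => ?_⟩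
  rw [abs_le]
  constructor
  · have := lip_aux (g := fun y => -φ y) (hdiffφ.neg) (L := L) (fun x => ?_) hab
    · simp only [neg_sub_neg] at this; linarith
    · have hdn : deriv (fun y => -φ y) x = -deriv φ x := by
        simpa using deriv.neg (f := φ) (x := x)
      rw [hdn]
      have := hLb x; rw [abs_le] at this; linarith
  · exact lip_aux hdiffφ (fun x => ((abs_le.1 (hLb x)).2)) hab

lemma geom_bound {m : ℝ} (hm1 : 1 < m) (n : ℕ) :
    ∑ j ∈ Finset.range n, (m⁻¹) ^ (n - j) ≤ (m - 1)⁻¹ := by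
  have hm0 : (0 : ℝ) < m := by linarith
  have hr0 : (0 : ℝ) ≤ m⁻¹ := by positivity
  have hr1 : m⁻¹ < 1 := by
    rw [inv_lt_one_iff₀]; right; exact hm1
  have step1 : ∑ j ∈ Finset.range n, (m⁻¹) ^ (n - j)
      = ∑ j ∈ Finset.range n, (m⁻¹) ^ (j + 1) := by
    rw [← Finset.sum_range_reflect (fun j => (m⁻¹ : ℝ) ^ (j + 1)) n]
    apply Finset.sum_congr rfl
    intro j hj
    have hj' := Finset.mem_range.1 hj
    congr 1
    omega
  have step2 : ∑ j ∈ Finset.range n, (m⁻¹ : ℝ) ^ (j + 1)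
      = m⁻¹ * ∑ j ∈ Finset.range n, (m⁻¹) ^ j := by
    rw [Finset.mul_sum]
    apply Finset.sum_congr rfl
    intro j _
    rw [pow_succ]; ring
  have step3 : ∑ j ∈ Finset.range n, (m⁻¹ : ℝ) ^ j ≤ (1 - m⁻¹)⁻¹ := by
    have := (summable_geometric_of_lt_one hr0 hr1).sum_le_tsum (Finset.range n)
      (fun i _ => pow_nonneg hr0 i)
    rwa [tsum_geometric_of_lt_one hr0 hr1] at this
  have step4 : m⁻¹ * (1 - m⁻¹)⁻¹ = (m - 1)⁻¹ := by
    have hm0' : m ≠ 0 := ne_of_gt hm0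
    have hm1' : m - 1 ≠ 0 := by intro h; apply absurd hm1; linarith
    field_simp
  calc ∑ j ∈ Finset.range n, (m⁻¹) ^ (n - j)
      = m⁻¹ * ∑ j ∈ Finset.range n, (m⁻¹) ^ j := by rw [step1, step2]
    _ ≤ m⁻¹ * (1 - m⁻¹)⁻¹ := by
        apply mul_le_mul_of_nonneg_left step3 hr0
    _ = (m - 1)⁻¹ := step4

lemma shadow (φ : ℝ → ℝ) (hper : Function.Periodic φ 1) {L m : ℝ}
    (hL : ∀ a b : ℝ, a ≤ b → |φ b - φ a| ≤ L * (b - a))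
    (hm1 : 1 < m) (hm : ∀ x : ℝ, m ≤ deriv E.lift x)
    {n : ℕ} (hn : 1 ≤ n) (x₀ : ℝ) :
    ∃ q ∈ E.Fix n, E.birkhoff φ n q ≤ E.birkhoff φ n x₀ + 2 * L * (m - 1)⁻¹ := by
  have hLnn : 0 ≤ L := by
    have := hL 0 1 zero_le_one
    have h0 := abs_nonneg (φ 1 - φ 0)
    linarith
  have hcontit : Continuous (E.lift^[n]) := E.hcont.iterate n
  set h : ℝ → ℝ := fun x => E.lift^[n] x - x with hh
  have hhc : Continuous h := hcontit.sub continuous_id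
  set k : ℤ := ⌈h x₀⌉ with hk
  have hk1 : h x₀ ≤ (k : ℝ) := Int.le_ceil _
  have hk2 : (k : ℝ) ≤ h x₀ + 1 := le_of_lt (Int.ceil_lt_add_one _)
  have hdeg2 : (2 : ℝ) ≤ (E.deg : ℝ) ^ n := by
    calc (2 : ℝ) = 2 ^ 1 := by norm_num
      _ ≤ (2 : ℝ) ^ n := by
          apply pow_le_pow_right₀ (by norm_num) hn
      _ ≤ (E.deg : ℝ) ^ n := by
          apply pow_le_pow_left₀ (by norm_num)
          exact_mod_cast E.two_le_deg
  have hx01 : h (x₀ + 1) = h x₀ + ((E.deg : ℝ) ^ n - 1) := by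
    have := E.iter_add_int n x₀ 1
    simp only [Int.cast_one, one_mul] at this
    simp only [hh, this]
    ring
  have hk3 : (k : ℝ) ≤ h (x₀ + 1) := by rw [hx01]; linarith
  obtain ⟨p, hp, hpk⟩ := intermediate_value_Icc (by linarith : x₀ ≤ x₀ + 1)
    hhc.continuousOn (Set.mem_Icc.2 ⟨hk1, hk3⟩)
  obtain ⟨hp1, hp2⟩ := Set.mem_Icc.1 hp
  have hfp : E.lift^[n] p = p + (k : ℝ) := by
    simp only [hh] at hpk; linarith
  set q : ℝ := Int.fract p with hqdef
  have hq : q = p + ((-⌊p⌋ : ℤ) : ℝ) := by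
    simp only [hqdef, Int.fract]; push_cast; ring
  set k' : ℤ := ⌊p⌋ + k - ⌊p⌋ * (E.deg : ℤ) ^ n with hk'
  have hfixq : E.lift^[n] q = q + (k' : ℝ) := by
    rw [hq, E.iter_add_int n p (-⌊p⌋), hfp, hk']
    push_cast; ring
  have hqFix : q ∈ E.Fix n :=
    ⟨Set.mem_Ico.2 ⟨Int.fract_nonneg p, Int.fract_lt_one p⟩, k', hfixq⟩
  refine ⟨q, hqFix, ?_⟩
  have hbq : E.birkhoff φ n q = E.birkhoff φ n p := by
    rw [hq, E.birkhoff_add_int φ hper]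
  rw [hbq]
  -- the distortion estimate
  have hd2 : E.lift^[n] p - E.lift^[n] x₀ ≤ 2 := by
    have hhx : h x₀ = E.lift^[n] x₀ - x₀ := rfl
    rw [hfp]; linarith
  have hterm : ∀ j ∈ Finset.range n,
      φ (E.lift^[j] p) - φ (E.lift^[j] x₀) ≤ 2 * L * (m⁻¹) ^ (n - j) := by
    intro j hj
    have hjn : j ≤ n := le_of_lt (Finset.mem_range.1 hj)
    have huv : E.lift^[j] x₀ ≤ E.lift^[j] p := E.iter_mono j hp1
    have hiter : E.lift^[n - j] (E.lift^[j] p) = E.lift^[n] p := by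
      rw [← Function.iterate_add_apply]
      congr 1; omega
    have hiter' : E.lift^[n - j] (E.lift^[j] x₀) = E.lift^[n] x₀ := by
      rw [← Function.iterate_add_apply]
      congr 1; omega
    have hgap : m ^ (n - j) * (E.lift^[j] p - E.lift^[j] x₀) ≤ 2 := by
      have := E.expand_iter hm1 hm (n - j) huv
      rw [hiter, hiter'] at this
      linarith
    have hmpow : (0 : ℝ) < m ^ (n - j) := pow_pos (by linarith) _
    have hvu : E.lift^[j] p - E.lift^[j] x₀ ≤ 2 * (m⁻¹) ^ (n - j) := by
      have h2d : (2 : ℝ) * (m ^ (n - j))⁻¹ = 2 / m ^ (n - j) := (div_eq_mul_inv 2 _).symm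
      rw [inv_pow, h2d, le_div_iff₀ hmpow, mul_comm]
      exact hgap
    have habs := hL _ _ huv
    have h1 := (abs_le.1 habs).2
    have h2 : L * (E.lift^[j] p - E.lift^[j] x₀) ≤ L * (2 * (m⁻¹) ^ (n - j)) :=
      mul_le_mul_of_nonneg_left hvu hLnn
    calc φ (E.lift^[j] p) - φ (E.lift^[j] x₀)
        ≤ L * (E.lift^[j] p - E.lift^[j] x₀) := h1
      _ ≤ L * (2 * (m⁻¹) ^ (n - j)) := h2
      _ = 2 * L * (m⁻¹) ^ (n - j) := by ring
  have hsum : E.birkhoff φ n p - E.birkhoff φ n x₀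
      ≤ ∑ j ∈ Finset.range n, 2 * L * (m⁻¹) ^ (n - j) := by
    unfold birkhoff
    rw [← Finset.sum_sub_distrib]
    exact Finset.sum_le_sum hterm
  have hgeo : ∑ j ∈ Finset.range n, 2 * L * (m⁻¹ : ℝ) ^ (n - j)
      ≤ 2 * L * (m - 1)⁻¹ := by
    rw [← Finset.mul_sum]
    apply mul_le_mul_of_nonneg_left (geom_bound hm1 n) (by linarith)
  linarith

lemma bound_of_per {g : ℝ → ℝ} (hg : Continuous g) (hper : Function.Periodic g 1) :
    ∃ B : ℝ, 0 ≤ B ∧ ∀ x, |g x| ≤ B := by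
  obtain ⟨x₁, _, hx₁⟩ := isCompact_Icc.exists_isMaxOn (Set.nonempty_Icc.2 zero_le_one)
    (hg.abs.continuousOn)
  have habs : Function.Periodic (fun x => |g x|) 1 := fun x => by simp [hper x]
  refine ⟨|g x₁|, abs_nonneg _, fun x => ?_⟩
  have h : Int.fract x + ((⌊x⌋ : ℤ) : ℝ) = x := by rw [Int.fract]; ring
  have h1 : |g x| = |g (Int.fract x)| := by
    rw [← per_int habs (Int.fract x) ⌊x⌋, h]
  rw [h1]
  exact hx₁ (Set.mem_Icc.2 ⟨Int.fract_nonneg x, le_of_lt (Int.fract_lt_one x)⟩)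

end ExpandingCircleMap

/-- The standard complex Gaussian `𝒩_ℂ(0,1)`: the law of `U + iV` with `U, V`
independent real centered Gaussians of variance `1/2`. -/
def stdComplexGaussian : Measure ℂ :=
  Measure.map (fun p : ℝ × ℝ => (p.1 : ℂ) + (p.2 : ℂ) * Complex.I)
    ((gaussianReal 0 (1 / 2)).prod (gaussianReal 0 (1 / 2)))

/-- The centered complex Gaussian law `𝒩_ℂ(0,v)`, i.e. `E[|z|²] = v`. -/
def complexGaussian (v : ℝ) : Measure ℂ :=
  Measure.map (fun z => (Real.sqrt v : ℂ) * z) stdComplexGaussian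

/-- Condition (C) for two families of real random variables indexed by the
periodic orbits. Here `K_n(0) = M^{-n(2k+1+ε)}`, an orbit `O ∈ 𝒫_m` has `O.card = m`,
and `X^n_O ∼ 𝒩(0, (n²/m) K_n(0))`, pairwise independence of the `X^n_O` over distinct
orbits, and independence of each `X^n_O` from every `Y^n_{O''}`. -/
structure CondC (E : ExpandingCircleMap) (k : ℕ) (ε : ℝ)
    {Ω : Type*} [MeasurableSpace Ω] (P : Measure Ω)
    (X Y : ℕ → Finset ℝ → Ω → ℝ) : Prop where
  law_X : ∀ n, 1 ≤ n → ∀ O : Finset ℝ, E.IsOrbit n O →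
    Measure.map (X n O) P = gaussianReal 0
      (Real.toNNReal ((n : ℝ) ^ 2 / (O.card : ℝ) * E.M ^ (-(n : ℝ) * (2 * k + 1 + ε))))
  indep_XX : ∀ n, 1 ≤ n → ∀ O O' : Finset ℝ, E.IsOrbit n O → E.IsOrbit n O' → O ≠ O' →
    IndepFun (X n O) (X n O') P
  indep_XY : ∀ n, 1 ≤ n → ∀ O O'' : Finset ℝ, E.IsOrbit n O → E.IsOrbit n O'' →
    IndepFun (X n O) (Y n O'') P

/-- The indicator of the open arc `{e^{iθ} : α < θ < β}` of the unit circle, as a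
`2π`-periodic function of the angle. -/
def arcIndicator (α β θ : ℝ) : ℝ :=
  Set.indicator {t : ℝ | ∃ k : ℤ, α + 2 * Real.pi * k < t ∧ t < β + 2 * Real.pi * k}
    (fun _ => (1 : ℝ)) θ

/-- A step function on the circle (as a `2π`-periodic function of the angle):
a finite linear combination of indicators of arcs. -/
def IsStepOnCircle (f : ℝ → ℂ) : Prop :=
  ∃ (N : ℕ) (lam : Fin N → ℂ) (a b : Fin N → ℝ),
    f = fun θ => ∑ q : Fin N, lam q * (arcIndicator (a q) (b q) θ : ℂ)


/-- A centered stationary Gaussian random field on the circle, described by its random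
Fourier coefficients `c p` and their variances `σ p = E[|c_p|²]`: the `(c_p)_{p ≥ 1}`
are independent centered complex Gaussians, `c 0` is a real centered Gaussian
independent of them, `c_{-p} = conj (c_p)`, and the variances grow at most
polynomially. -/
structure IsGaussianField {Ω : Type*} [MeasurableSpace Ω] (P : Measure Ω)
    (c : ℤ → Ω → ℂ) (σ : ℤ → ℝ) : Prop where
  meas : ∀ p : ℤ, Measurable (c p)
  symm : ∀ p : ℤ, c (-p) = fun ω => (starRingEnd ℂ) (c p ω)
  indep : iIndepFun (fun p : ℕ => c (p : ℤ)) P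
  law_pos : ∀ p : ℤ, 1 ≤ p → Measure.map (c p) P = complexGaussian (σ p)
  law_zero : Measure.map (c 0) P =
    Measure.map (Complex.ofReal) (gaussianReal 0 (Real.toNNReal (σ 0)))
  sigma_symm : ∀ p : ℤ, σ (-p) = σ p
  sigma_nonneg : ∀ p : ℤ, 0 ≤ σ p
  poly_growth : ∃ C d : ℝ, ∀ p : ℤ, σ p ≤ C * (1 + |(p : ℝ)|) ^ d

/-- The realization `x ↦ ∑_p c_p(ω) e^{2iπpx}` of a random Fourier series, as a real
valued function (the sum being real for a symmetric family of coefficients). -/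
def fieldEval (c : ℤ → ℂ) (x : ℝ) : ℝ :=
  (∑' p : ℤ, c p * Complex.exp (2 * Real.pi * p * x * Complex.I)).re

/-- The `p`-th Fourier coefficient `∫_𝕋 φ(x) e^{-2iπpx} dx` of a function on the circle. -/
def fourierCoefficient (φ : ℝ → ℂ) (p : ℤ) : ℂ :=
  ∫ x in (0 : ℝ)..1, φ x * Complex.exp (-(2 * Real.pi * p * x) * Complex.I)

/-- The uniform (normalized Haar) probability measure on the unit circle `S¹ ⊆ ℂ`. -/
def circleUniform : Measure ℂ :=
  (ENNReal.ofReal (2 * Real.pi))⁻¹ •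
    Measure.map (fun θ : ℝ => Complex.exp (θ * Complex.I))
      (MeasureTheory.volume.restrict (Set.Ioc 0 (2 * Real.pi)))

/-- For `φ ∈ C¹(𝕋)`, the limit `φ_min = lim_n inf_x (1/n) φ^n_x` exists
(Fekete) and equals the corresponding limit where the infimum is restricted to the
periodic points of period `n`. -/
theorem statement15 (E : ExpandingCircleMap) (φ : ℝ → ℝ) (hφ : ContDiff ℝ 1 φ)
    (hper : Function.Periodic φ 1) :
    ∃ L : ℝ,
      Filter.Tendsto (fun n : ℕ => (⨅ x : ℝ, E.birkhoff φ n x) / n)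
        Filter.atTop (𝓝 L) ∧
      Filter.Tendsto (fun n : ℕ => (⨅ x : E.Fix n, E.birkhoff φ n x.1) / n)
        Filter.atTop (𝓝 L) := by

  classical
  obtain ⟨m, hm1, hm⟩ := E.exists_m
  obtain ⟨Lip, hLip0, hLip⟩ := ExpandingCircleMap.lip_of_c1_per hφ hper
  obtain ⟨B, hB0, hB⟩ := ExpandingCircleMap.bound_of_per hφ.continuous hper
  set C : ℝ := 2 * Lip * (m - 1)⁻¹ with hCdef
  have hC0 : 0 ≤ C := by
    have h1 : (0:ℝ) ≤ (m - 1)⁻¹ := inv_nonneg.2 (by linarith)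
    have h2 : (0:ℝ) ≤ 2 * Lip := by linarith
    exact mul_nonneg h2 h1
  set u : ℕ → ℝ := fun n => ⨅ x : ℝ, E.birkhoff φ n x with hu
  have hbk_lb : ∀ (n : ℕ) (x : ℝ), -((n : ℝ) * B) ≤ E.birkhoff φ n x := by
    intro n x
    have hterm : ∀ j ∈ Finset.range n, -B ≤ φ (E.lift^[j] x) :=
      fun j _ => (abs_le.1 (hB _)).1
    calc -((n : ℝ) * B) = ∑ _j ∈ Finset.range n, (-B) := by
          rw [Finset.sum_const, Finset.card_range, nsmul_eq_mul]; ring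
      _ ≤ E.birkhoff φ n x := Finset.sum_le_sum hterm
  have hbk_ub : ∀ (n : ℕ) (x : ℝ), E.birkhoff φ n x ≤ (n : ℝ) * B := by
    intro n x
    have hterm : ∀ j ∈ Finset.range n, φ (E.lift^[j] x) ≤ B :=
      fun j _ => (abs_le.1 (hB _)).2
    calc E.birkhoff φ n x ≤ ∑ _j ∈ Finset.range n, B := Finset.sum_le_sum hterm
      _ = (n : ℝ) * B := by
          rw [Finset.sum_const, Finset.card_range, nsmul_eq_mul]
  have hbdd : ∀ n : ℕ, BddBelow (Set.range (E.birkhoff φ n)) := by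
    intro n
    refine ⟨-((n : ℝ) * B), ?_⟩
    rintro _ ⟨x, rfl⟩
    exact hbk_lb n x
  have hu_ub : ∀ n : ℕ, u n ≤ (n : ℝ) * B :=
    fun n => (ciInf_le (hbdd n) 0).trans (hbk_ub n 0)
  have hsuper : ∀ a b : ℕ, u a + u b ≤ u (a + b) := by
    intro a b
    apply le_ciInf
    intro x
    rw [E.birkhoff_split φ a b x]
    have h1 : u a ≤ E.birkhoff φ a x := ciInf_le (hbdd a) x
    have h2 : u b ≤ E.birkhoff φ b (E.lift^[a] x) := ciInf_le (hbdd b) _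
    linarith
  have hsub : Subadditive (fun n => -(u n)) := by
    intro a b
    simp only
    linarith [hsuper a b]
  have hbb2 : BddBelow (Set.range fun n : ℕ => -(u n) / n) := by
    refine ⟨-B, ?_⟩
    rintro _ ⟨n, rfl⟩
    rcases Nat.eq_zero_or_pos n with h0 | h1
    · subst h0
      simp only [Nat.cast_zero, div_zero]
      linarith
    · have hn : (0 : ℝ) < n := by exact_mod_cast h1
      rw [le_div_iff₀ hn]
      have := hu_ub n
      have hc : B * (n : ℝ) = (n : ℝ) * B := mul_comm _ _
      linarith
  have htu : Filter.Tendsto (fun n : ℕ => u n / n) Filter.atTop (𝓝 (-hsub.lim)) := by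
    have h2 := (hsub.tendsto_lim hbb2).neg
    simpa [neg_div] using h2
  refine ⟨-hsub.lim, htu, ?_⟩
  set v : ℕ → ℝ := fun n => ⨅ x : E.Fix n, E.birkhoff φ n x.1 with hv
  have hup : Filter.Tendsto (fun n : ℕ => u n / n + C / n) Filter.atTop
      (𝓝 (-hsub.lim + 0)) := htu.add (tendsto_const_div_atTop_nhds_zero_nat C)
  rw [add_zero] at hup
  apply tendsto_of_tendsto_of_tendsto_of_le_of_le' htu hup
  · filter_upwards [Filter.eventually_ge_atTop 1] with n hn
    have hn0 : (0 : ℝ) < n := by exact_mod_cast hn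
    obtain ⟨q, hqF, _⟩ := E.shadow φ hper hLip hm1 hm hn 0
    haveI : Nonempty (E.Fix n) := ⟨⟨q, hqF⟩⟩
    have h1 : u n ≤ v n := le_ciInf fun x => ciInf_le (hbdd n) x.1
    exact div_le_div_of_nonneg_right h1 hn0.le |>.trans_eq rfl
  · filter_upwards [Filter.eventually_ge_atTop 1] with n hn
    have hn0 : (0 : ℝ) < n := by exact_mod_cast hn
    have hbdv : BddBelow (Set.range fun x : E.Fix n => E.birkhoff φ n x.1) := by
      refine ⟨-((n : ℝ) * B), ?_⟩
      rintro _ ⟨x, rfl⟩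
      exact hbk_lb n x.1
    have key : ∀ x₀ : ℝ, v n ≤ E.birkhoff φ n x₀ + C := by
      intro x₀
      obtain ⟨q, hqF, hq⟩ := E.shadow φ hper hLip hm1 hm hn x₀
      exact (ciInf_le hbdv ⟨q, hqF⟩).trans hq
    have h2 : v n ≤ u n + C := by
      have h3 : v n - C ≤ u n := le_ciInf fun x₀ => by linarith [key x₀]
      linarith
    calc v n / n ≤ (u n + C) / n := div_le_div_of_nonneg_right h2 hn0.le |>.trans_eq rfl
      _ = u n / n + C / n := add_div _ _ _


end
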